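/- If an unsatisfiable CNF formula F has a resolution refutation π whose associated proof DAG has depth (longest path length) s, then F has a (possibly tree-like) resolution refutation in clause space at most s + 2. -/
import Mathlib


namespace Resolution

/-- A clause: a finite set of literals, a literal being a variable paired with
a polarity. -/
abbrev Clause (X : Type*) := Finset (X × Bool)

/-- A configuration: a finite set of clauses kept in memory. -/
abbrev Config (X : Type*) := Finset (Clause X)

/-- A step of a configuration-style resolution refutation. -/
inductive Step (X : Type*) where
  /-- download of an axiom clause -/
  | ax (C : Clause X)
  /-- resolution: from B ∨ x and C ∨ ¬x infer B ∨ C -/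
  | res (B C : Clause X) (x : X)
  /-- weakening: from B infer B ∨ C -/
  | weak (B C : Clause X)
  /-- erasure of a set of clauses -/
  | erase (S : Finset (Clause X))

variable {X : Type*} [DecidableEq X]

/-- The effect of a step on the memory configuration. -/
def Step.apply : Config X → Step X → Config X
  | M, .ax C => insert C M
  | M, .res B C _ => insert (B ∪ C) M
  | M, .weak B C => insert (B ∪ C) M
  | M, .erase S => M \ S

/-- Legality of a step with respect to the formula `F` and current memory `M`. -/
def Step.ok (F : Finset (Clause X)) (M : Config X) : Step X → Prop
  | .ax C => C ∈ F
  | .res B C x =>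
      insert (x, true) B ∈ M ∧ insert (x, false) C ∈ M ∧
      (x, true) ∉ B ∧ (x, false) ∉ B ∧ (x, true) ∉ C ∧ (x, false) ∉ C
  | .weak B _ => B ∈ M
  | .erase _ => True

/-- Validity of a sequence of steps starting from memory `M`. -/
def Valid (F : Finset (Clause X)) : Config X → List (Step X) → Prop
  | _, [] => True
  | M, s :: rest => Step.ok F M s ∧ Valid F (Step.apply M s) rest

/-- `π` is a resolution refutation of `F`: it is valid starting from the empty
memory and the empty clause is eventually derived. -/
def IsRefutation (F : Finset (Clause X)) (π : List (Step X)) : Prop :=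
  Valid F ∅ π ∧ (∅ : Clause X) ∈ π.foldl Step.apply ∅

/-- The sequence of configurations visited by `π`. -/
def configs (π : List (Step X)) : List (Config X) :=
  π.scanl Step.apply ∅

/-- Length: the number of axiom download and inference steps. -/
def length (π : List (Step X)) : ℕ :=
  (π.filter (fun s => match s with | .erase _ => false | _ => true)).length

/-- Width: the maximal size of a clause appearing in some configuration. -/
def width (π : List (Step X)) : ℕ :=
  ((configs π).map (fun M => M.sup Finset.card)).foldr max 0

/-- Clause space: the maximal number of clauses in a configuration. -/
def space (π : List (Step X)) : ℕ :=
  ((configs π).map Finset.card).foldr max 0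

/-- Variable space: the maximal number of distinct variables in a configuration. -/
def varSpace (π : List (Step X)) : ℕ :=
  ((configs π).map (fun M => (M.sup (fun C => C.image Prod.fst)).card)).foldr max 0

/-- A refutation is homogeneous if every resolution step resolves C ∨ x and
C ∨ ¬x to C. -/
def Homogeneous (π : List (Step X)) : Prop :=
  ∀ s ∈ π, ∀ B C : Clause X, ∀ x : X, s = Step.res B C x → B = C

/-- No weakening steps occur in `π`. -/
def NoWeakening (π : List (Step X)) : Prop :=
  ∀ s ∈ π, ∀ B C : Clause X, s ≠ Step.weak B C

end Resolution


open Resolution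

section Aux

variable {X : Type*} [DecidableEq X]

lemma valid_append (F : Finset (Clause X)) :
    ∀ (π₁ π₂ : List (Step X)) (M : Config X),
      Valid F M (π₁ ++ π₂) ↔ Valid F M π₁ ∧ Valid F (π₁.foldl Step.apply M) π₂ := by
  intro π₁
  induction π₁ with
  | nil => intro π₂ M; simp [Valid]
  | cons a l ih =>
      intro π₂ M
      simp [Valid, ih, and_assoc]

lemma mem_scanl_append {α β : Type*} (f : β → α → β) :
    ∀ (l₁ l₂ : List α) (b : β) (N : β),
      N ∈ (l₁ ++ l₂).scanl f b →
      N ∈ l₁.scanl f b ∨ N ∈ l₂.scanl f (l₁.foldl f b) := by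
  intro l₁
  induction l₁ with
  | nil => intro l₂ b N h; right; simpa using h
  | cons a l ih =>
      intro l₂ b N h
      rw [List.cons_append, List.scanl_cons] at h
      rcases List.mem_cons.mp h with h | h
      · left; simp [List.scanl_cons, h]
      · rcases ih l₂ (f b a) N h with h | h
        · left; rw [List.scanl_cons]; exact List.mem_cons_of_mem _ h
        · right; simpa using h

lemma foldr_max_le (n : ℕ) : ∀ (l : List ℕ), (∀ a ∈ l, a ≤ n) → l.foldr max 0 ≤ n := by
  intro l
  induction l with
  | nil => intro _; simp
  | cons a l ih =>
      intro h
      simp only [List.foldr_cons, max_le_iff]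
      exact ⟨h a (by simp), ih fun b hb => h b (by simp [hb])⟩

lemma derive (F : Finset (Clause X)) {T : ℕ} (cls : Fin T → Clause X) (dep : Fin T → ℕ)
    (hjust : ∀ i : Fin T,
      (cls i ∈ F) ∨
      (∃ j k : Fin T, j < i ∧ k < i ∧ dep j < dep i ∧ dep k < dep i ∧
        ∃ B C : Clause X, ∃ x : X,
          (x, true) ∉ B ∧ (x, false) ∉ B ∧ (x, true) ∉ C ∧ (x, false) ∉ C ∧
          cls j = insert (x, true) B ∧ cls k = insert (x, false) C ∧
          cls i = B ∪ C) ∨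
      (∃ j : Fin T, j < i ∧ dep j < dep i ∧ cls j ⊆ cls i)) :
    ∀ d : ℕ, ∀ i : Fin T, dep i ≤ d → ∀ M : Config X,
      ∃ π : List (Step X), Valid F M π ∧
        π.foldl Step.apply M = insert (cls i) M ∧
        ∀ N ∈ π.scanl Step.apply M, N.card ≤ M.card + d + 2 := by
  intro d
  induction d with
  | zero =>
      intro i hi M
      rcases hjust i with hax | ⟨j, k, _, _, hj, _, _⟩ | ⟨j, _, hj, _⟩
      · refine ⟨[Step.ax (cls i)], ⟨hax, trivial⟩, rfl, ?_⟩
        intro N hN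
        simp only [List.scanl_cons, List.scanl_nil, List.singleton_append, List.mem_cons, List.not_mem_nil, or_false] at hN
        rcases hN with rfl | rfl
        · omega
        · have := Finset.card_insert_le (cls i) M
          simp only [Step.apply]; omega
      · omega
      · omega
  | succ d ih =>
      intro i hi M
      rcases hjust i with hax | ⟨j, k, hji, hki, hj, hk, B, C, x, hb1, hb2, hc1, hc2, hcj, hck, hci⟩
        | ⟨j, hji, hj, hsub⟩
      · -- axiom
        refine ⟨[Step.ax (cls i)], ⟨hax, trivial⟩, rfl, ?_⟩
        intro N hN
        simp only [List.scanl_cons, List.scanl_nil, List.singleton_append, List.mem_cons, List.not_mem_nil, or_false] at hN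
        rcases hN with rfl | rfl
        · omega
        · have := Finset.card_insert_le (cls i) M
          simp only [Step.apply]; omega
      · -- resolution
        obtain ⟨π₁, hv₁, hf₁, hc₁⟩ := ih j (by omega) M
        set M₁ := insert (cls j) M with hM₁
        obtain ⟨π₂, hv₂, hf₂, hc₂⟩ := ih k (by omega) M₁
        set M₂ := insert (cls k) M₁ with hM₂
        set M₃ := insert (cls i) M₂ with hM₃
        refine ⟨π₁ ++ (π₂ ++ [Step.res B C x, Step.erase (M₃ \ insert (cls i) M)]), ?_, ?_, ?_⟩
        · rw [valid_append]
          refine ⟨hv₁, ?_⟩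
          rw [hf₁, valid_append]
          refine ⟨hv₂, ?_⟩
          rw [hf₂]
          refine ⟨⟨?_, ?_, hb1, hb2, hc1, hc2⟩, trivial, trivial⟩
          · rw [← hcj]; exact Finset.mem_insert_of_mem (Finset.mem_insert_self _ _)
          · rw [← hck]; exact Finset.mem_insert_self _ _
        · rw [List.foldl_append, hf₁, List.foldl_append, hf₂]
          simp only [List.foldl_cons, List.foldl_nil]
          have h3 : Step.apply M₂ (Step.res B C x) = M₃ := by
            simp [Step.apply, ← hci, hM₃]
          rw [h3]
          show M₃ \ (M₃ \ insert (cls i) M) = insert (cls i) M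
          rw [Finset.sdiff_sdiff_self_left]
          apply Finset.inter_eq_right.mpr
          intro y hy
          rcases Finset.mem_insert.mp hy with h | h
          · exact h ▸ Finset.mem_insert_self _ _
          · exact Finset.mem_insert_of_mem (Finset.mem_insert_of_mem
              (Finset.mem_insert_of_mem h))
        · intro N hN
          have hMc : M₁.card ≤ M.card + 1 := Finset.card_insert_le _ _
          have hM2c : M₂.card ≤ M.card + 2 :=
            le_trans (Finset.card_insert_le _ _) (by omega)
          have hM3c : M₃.card ≤ M.card + 3 :=
            le_trans (Finset.card_insert_le _ _) (by omega)
          rcases mem_scanl_append _ _ _ _ _ hN with h | h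
          · have := hc₁ N h; omega
          · rw [hf₁] at h
            rcases mem_scanl_append _ _ _ _ _ h with h | h
            · have := hc₂ N h
              omega
            · rw [hf₂] at h
              have h3 : Step.apply M₂ (Step.res B C x) = M₃ := by
                simp [Step.apply, ← hci, hM₃]
              simp only [List.scanl_cons, List.scanl_nil, List.singleton_append, h3, List.mem_cons, List.not_mem_nil, or_false] at h
              rcases h with rfl | rfl | rfl
              · omega
              · omega
              · have hsub : Step.apply M₃ (Step.erase (M₃ \ insert (cls i) M)) ⊆ M₃ := by
                  simp [Step.apply, Finset.sdiff_subset]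
                have := Finset.card_le_card hsub
                omega
      · -- weakening
        obtain ⟨π₁, hv₁, hf₁, hc₁⟩ := ih j (by omega) M
        set M₁ := insert (cls j) M with hM₁
        set M₂ := insert (cls i) M₁ with hM₂
        have hw : Step.apply M₁ (Step.weak (cls j) (cls i)) = M₂ := by
          simp [Step.apply, Finset.union_eq_right.mpr hsub, hM₂]
        refine ⟨π₁ ++ [Step.weak (cls j) (cls i), Step.erase (M₂ \ insert (cls i) M)],
          ?_, ?_, ?_⟩
        · rw [valid_append]
          refine ⟨hv₁, ?_⟩
          rw [hf₁]
          exact ⟨Finset.mem_insert_self _ _, trivial, trivial⟩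
        · rw [List.foldl_append, hf₁]
          simp only [List.foldl_cons, List.foldl_nil]
          rw [hw]
          show M₂ \ (M₂ \ insert (cls i) M) = insert (cls i) M
          rw [Finset.sdiff_sdiff_self_left]
          apply Finset.inter_eq_right.mpr
          intro y hy
          rcases Finset.mem_insert.mp hy with h | h
          · exact h ▸ Finset.mem_insert_self _ _
          · exact Finset.mem_insert_of_mem (Finset.mem_insert_of_mem h)
        · intro N hN
          have hMc : M₁.card ≤ M.card + 1 := Finset.card_insert_le _ _
          have hM2c : M₂.card ≤ M.card + 2 :=
            le_trans (Finset.card_insert_le _ _) (by omega)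
          rcases mem_scanl_append _ _ _ _ _ hN with h | h
          · have := hc₁ N h; omega
          · rw [hf₁] at h
            simp only [List.scanl_cons, List.scanl_nil, List.singleton_append, hw, List.mem_cons, List.not_mem_nil, or_false] at h
            rcases h with rfl | rfl | rfl
            · omega
            · omega
            · have hsub2 : Step.apply M₂ (Step.erase (M₂ \ insert (cls i) M)) ⊆ M₂ := by
                simp [Step.apply, Finset.sdiff_subset]
              have := Finset.card_le_card hsub2
              omega

end Aux


/-- if F has a resolution refutation whose proof DAG has depth at
most s (witnessed by a depth labelling `dep`), then F has a refutation of clause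
space at most s + 2. -/
theorem stmt9 {X : Type*} [DecidableEq X] (F : Finset (Clause X))
    (T s : ℕ) (hT : 0 < T) (cls : Fin T → Clause X) (dep : Fin T → ℕ)
    (hlast : cls ⟨T - 1, by omega⟩ = ∅)
    (hdep : ∀ i, dep i ≤ s)
    (hjust : ∀ i : Fin T,
      (cls i ∈ F) ∨
      (∃ j k : Fin T, j < i ∧ k < i ∧ dep j < dep i ∧ dep k < dep i ∧
        ∃ B C : Clause X, ∃ x : X,
          (x, true) ∉ B ∧ (x, false) ∉ B ∧ (x, true) ∉ C ∧ (x, false) ∉ C ∧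
          cls j = insert (x, true) B ∧ cls k = insert (x, false) C ∧
          cls i = B ∪ C) ∨
      (∃ j : Fin T, j < i ∧ dep j < dep i ∧ cls j ⊆ cls i)) :
    ∃ π : List (Step X), IsRefutation F π ∧ space π ≤ s + 2 := by
  obtain ⟨π, hv, hf, hc⟩ := derive F cls dep hjust s ⟨T - 1, by omega⟩ (hdep _) ∅
  refine ⟨π, ⟨hv, ?_⟩, ?_⟩
  · rw [hf, hlast]; exact Finset.mem_insert_self _ _
  · unfold space configs
    apply foldr_max_le
    intro a ha
    simp only [List.mem_map] at ha
    obtain ⟨N, hN, rfl⟩ := ha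
    have := hc N hN
    simpa using this
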